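/- Let g : ℝ → ℝ be continuously differentiable and set H̄_{ik}(x) = g(|x|²) H_{ik}(x). Then for every x ∈ ℝⁿ: Σ_{i,k,l=1}^n (∂_l H̄_{ik}(x))² = g(|x|²)² Σ_{i,k,l=1}^n (∂_l H_{ik}(x))² + ( 8 g(|x|²) g′(|x|²) + 4 |x|² g′(|x|²)² ) Σ_{i,k=1}^n H_{ik}(x)². -/

import Mathlib

open scoped BigOperators

/-- The quadratic tensor field `H_{ik}(x) = ∑_{p,q} W_{ipkq} x_p x_q`. -/
noncomputable def Hten (n : ℕ) (W : Fin n → Fin n → Fin n → Fin n → ℝ)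
    (i k : Fin n) (x : EuclideanSpace ℝ (Fin n)) : ℝ :=
  ∑ p, ∑ q, W i p k q * x p * x q

/-- Partial derivative in the `l`-th coordinate direction. -/
noncomputable def pder (n : ℕ) (l : Fin n) (f : EuclideanSpace ℝ (Fin n) → ℝ)
    (x : EuclideanSpace ℝ (Fin n)) : ℝ :=
  fderiv ℝ f x (EuclideanSpace.single l 1)

/-!
By the product and chain rules, `∂_l (g(|x|²) H) = g ∂_l H + 2 g' x_l H`; squaring and summing over `l`, the cross term is
`4 g g' H ∑_l x_l ∂_l H = 8 g g' H²` by Euler's identity for the degree-two form `H`,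
and the last term is `4 g'² H² ∑_l x_l² = 4 |x|² g'² H²`.
-/

theorem fderiv_apply_self_of_homogeneous {E F : Type*} [NormedAddCommGroup E] [NormedSpace ℝ E]
    [NormedAddCommGroup F] [NormedSpace ℝ F] {f : E → F} {x : E} (hf : DifferentiableAt ℝ f x)
    {d : ℕ} (hhom : ∀ t : ℝ, f (t • x) = t ^ d • f x) :
    fderiv ℝ f x x = (d : ℝ) • f x := by
  have hline : HasDerivAt (fun t : ℝ => f (t • x)) (fderiv ℝ f x x) 1 := by
    have hsmul : HasDerivAt (fun t : ℝ => t • x) x 1 := by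
      simpa using (hasDerivAt_id (1 : ℝ)).smul_const x
    rw [← one_smul ℝ x] at hf
    have hcomp := hf.hasFDerivAt.comp_hasDerivAt (1 : ℝ) hsmul
    rwa [one_smul] at hcomp
  have hpow : HasDerivAt (fun t : ℝ => t ^ d • f x) ((d : ℝ) • f x) 1 := by
    simpa using (hasDerivAt_pow d (1 : ℝ)).smul_const (f x)
  exact hline.unique (by simpa only [hhom] using hpow)

section RadialFactor

variable {n : ℕ} {f : EuclideanSpace ℝ (Fin n) → ℝ} {g : ℝ → ℝ} {x : EuclideanSpace ℝ (Fin n)}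

theorem sum_mul_pder_eq_fderiv : ∑ l, x l * pder n l f x = fderiv ℝ f x x := by
  rw [← congrArg (fderiv ℝ f x) ((EuclideanSpace.basisFun (Fin n) ℝ).sum_repr x)]
  simp [pder]

theorem pder_radial_mul (hf : DifferentiableAt ℝ f x) (hg : DifferentiableAt ℝ g (‖x‖ ^ 2))
    (l : Fin n) :
    pder n l (fun y => g (‖y‖ ^ 2) * f y) x
      = g (‖x‖ ^ 2) * pder n l f x + 2 * deriv g (‖x‖ ^ 2) * x l * f x := by
  have hG : HasFDerivAt (fun y : EuclideanSpace ℝ (Fin n) => g (‖y‖ ^ 2))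
      (deriv g (‖x‖ ^ 2) • (2 • innerSL ℝ x)) x :=
    hg.hasDerivAt.comp_hasFDerivAt x (hasStrictFDerivAt_norm_sq x).hasFDerivAt
  rw [pder, (hG.fun_mul hf.hasFDerivAt).fderiv, pder]
  simp only [add_apply, smul_apply, smul_eq_mul,
    coe_innerSL_apply, EuclideanSpace.inner_single_right, Real.ringHom_apply, one_mul,
    nsmul_eq_mul, Nat.cast_ofNat]
  ring

theorem sum_sq_pder_radial_mul (hf : DifferentiableAt ℝ f x)
    (hg : DifferentiableAt ℝ g (‖x‖ ^ 2)) {c : ℝ} (hhom : fderiv ℝ f x x = c * f x) :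
    ∑ l, (pder n l (fun y => g (‖y‖ ^ 2) * f y) x) ^ 2
      = g (‖x‖ ^ 2) ^ 2 * ∑ l, (pder n l f x) ^ 2
        + (4 * c * g (‖x‖ ^ 2) * deriv g (‖x‖ ^ 2)
            + 4 * ‖x‖ ^ 2 * deriv g (‖x‖ ^ 2) ^ 2) * f x ^ 2 := by
  set G := g (‖x‖ ^ 2)
  set G' := deriv g (‖x‖ ^ 2)
  calc ∑ l, (pder n l (fun y => g (‖y‖ ^ 2) * f y) x) ^ 2
      = ∑ l, (G ^ 2 * pder n l f x ^ 2 + 4 * G * G' * f x * (x l * pder n l f x)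
          + 4 * G' ^ 2 * f x ^ 2 * x l ^ 2) := by
        refine Finset.sum_congr rfl fun l _ => ?_
        rw [pder_radial_mul hf hg]
        ring
    _ = G ^ 2 * ∑ l, pder n l f x ^ 2 + 4 * G * G' * f x * ∑ l, x l * pder n l f x
          + 4 * G' ^ 2 * f x ^ 2 * ∑ l, x l ^ 2 := by
        simp only [Finset.sum_add_distrib, Finset.mul_sum]
    _ = _ := by
        rw [sum_mul_pder_eq_fderiv, hhom, ← EuclideanSpace.real_norm_sq_eq]
        ring

end RadialFactor

theorem differentiable_Hten (n : ℕ) (W : Fin n → Fin n → Fin n → Fin n → ℝ) (i k : Fin n) :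
    Differentiable ℝ (Hten n W i k) := by
  unfold Hten
  fun_prop

theorem fderiv_Hten_apply_self (n : ℕ) (W : Fin n → Fin n → Fin n → Fin n → ℝ) (i k : Fin n)
    (x : EuclideanSpace ℝ (Fin n)) :
    fderiv ℝ (Hten n W i k) x x = 2 * Hten n W i k x := by
  refine fderiv_apply_self_of_homogeneous (differentiable_Hten n W i k x) fun t => ?_
  simp only [Hten, PiLp.smul_apply, smul_eq_mul, Finset.mul_sum]
  exact Finset.sum_congr rfl fun p _ => Finset.sum_congr rfl fun q _ => by ring

theorem stmt_7_general (n : ℕ) (W : Fin n → Fin n → Fin n → Fin n → ℝ)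
    (g : ℝ → ℝ) (hg : ContDiff ℝ 1 g)
    (x : EuclideanSpace ℝ (Fin n)) :
    ∑ i, ∑ k, ∑ l, (pder n l (fun y => g (‖y‖ ^ 2) * Hten n W i k y) x) ^ 2
      = g (‖x‖ ^ 2) ^ 2 * (∑ i, ∑ k, ∑ l, (pder n l (Hten n W i k) x) ^ 2)
        + (8 * g (‖x‖ ^ 2) * deriv g (‖x‖ ^ 2)
            + 4 * ‖x‖ ^ 2 * (deriv g (‖x‖ ^ 2)) ^ 2) *
          (∑ i, ∑ k, (Hten n W i k x) ^ 2) := by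
  have hgx : DifferentiableAt ℝ g (‖x‖ ^ 2) := hg.differentiable one_ne_zero _
  simp only [sum_sq_pder_radial_mul (differentiable_Hten n W _ _ x) hgx
    (fderiv_Hten_apply_self n W _ _ x), Finset.sum_add_distrib, ← Finset.mul_sum]
  ring

theorem stmt_7 (n : ℕ) (hn : 3 ≤ n) (W : Fin n → Fin n → Fin n → Fin n → ℝ)
    (hsymm1 : ∀ i j k l, W i j k l = - W j i k l)
    (hsymm2 : ∀ i j k l, W i j k l = - W i j l k)
    (hsymm3 : ∀ i j k l, W i j k l = W k l i j)
    (hBianchi : ∀ i j k l, W i j k l + W i k l j + W i l j k = 0)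
    (htrace : ∀ j l, ∑ i, W i j i l = 0)
    (g : ℝ → ℝ) (hg : ContDiff ℝ 1 g)
    (x : EuclideanSpace ℝ (Fin n)) :
    ∑ i, ∑ k, ∑ l, (pder n l (fun y => g (‖y‖ ^ 2) * Hten n W i k y) x) ^ 2
      = g (‖x‖ ^ 2) ^ 2 * (∑ i, ∑ k, ∑ l, (pder n l (Hten n W i k) x) ^ 2)
        + (8 * g (‖x‖ ^ 2) * deriv g (‖x‖ ^ 2)
            + 4 * ‖x‖ ^ 2 * (deriv g (‖x‖ ^ 2)) ^ 2) *
          (∑ i, ∑ k, (Hten n W i k x) ^ 2) :=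
  stmt_7_general n W g hg x
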